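/- arXiv:2101.06691 — 4 statements merged into one kernel-verified Lean document; each statement's English description precedes it below -/
import Mathlib

section
/- Every nonempty class K of finitary operations on a finite field A that is stable under right and left composition with the clone L of affine (degree ≤ 1) functions contains all constant functions of every arity. -/
/-- A finitary operation, with positive arity. -/
abbrev OpSig (A B : Type*) := Σ n : ℕ, (Fin (n + 1) → A) → B

/-- Composition of function classes. -/
def classComp {A B C : Type*} (F : Set (OpSig B C)) (K : Set (OpSig A B)) :
    Set (OpSig A C) :=
  { h | ∃ (n m : ℕ) (f : (Fin (n + 1) → B) → C)
      (g : Fin (n + 1) → (Fin (m + 1) → A) → B),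
      (⟨n, f⟩ : OpSig B C) ∈ F ∧ (∀ i, (⟨m, g i⟩ : OpSig A B) ∈ K) ∧
      h = ⟨m, fun a => f fun i => g i a⟩ }

/-- `f` has degree at most `k`: it is represented by a polynomial of
total degree at most `k`. -/
def HasDegLE {F : Type*} [CommSemiring F] {n : ℕ} (f : (Fin n → F) → F)
    (k : ℕ) : Prop :=
  ∃ q : MvPolynomial (Fin n) F, q.totalDegree ≤ k ∧ ∀ a, MvPolynomial.eval a q = f a

/-- The clone of affine (degree at most 1) operations on `F`. -/
def affineClass (F : Type*) [CommSemiring F] : Set (OpSig F F) :=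
  { g | HasDegLE g.2 1 }

/-- Every nonempty class of operations on a finite field that is stable under
right and left composition with the clone of affine functions contains all
constant functions of every arity. -/
theorem constants_mem_of_affine_stable {F : Type*} [Field F] [Fintype F]
    (K : Set (OpSig F F)) (hne : K.Nonempty)
    (hright : classComp K (affineClass F) ⊆ K)
    (hleft : classComp (affineClass F) K ⊆ K) :
    ∀ (n : ℕ) (b : F), (⟨n, fun _ => b⟩ : OpSig F F) ∈ K := by
  intro n b
  obtain ⟨⟨m, f0⟩, hf0⟩ := hne
  -- Step 1: change arity to n using right composition with projections.
  have hproj : (⟨n, fun a : Fin (n + 1) → F => a 0⟩ : OpSig F F) ∈ affineClass F := by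
    refine ⟨MvPolynomial.X 0, ?_, fun a => by simp⟩
    simpa using MvPolynomial.totalDegree_X_le (0 : Fin (n + 1))
  have h1 : (⟨n, fun a : Fin (n + 1) → F => f0 (fun _ => a 0)⟩ : OpSig F F) ∈ K := by
    apply hright
    exact ⟨m, n, f0, fun _ a => a 0, hf0, fun _ => hproj, rfl⟩
  -- Step 2: left compose with the constant affine function b.
  apply hleft
  refine ⟨0, n, fun _ => b, fun _ a => f0 (fun _ => a 0), ?_, fun _ => h1, rfl⟩
  exact ⟨MvPolynomial.C b, le_trans (le_of_eq (MvPolynomial.totalDegree_C b)) (by norm_num),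
    fun a => by simp⟩
end

section
/- For any Boolean function f of arity n, the inner negation f^n satisfies f^n = Σ_{S ∈ M(f)} Σ_{T ⊆ S} x_T over GF(2). Consequently, M(f) and M(f^n) have the same maximal elements with respect to inclusion. -/
/-- A Boolean function of arity `n`. -/
abbrev Bf (n : ℕ) := (Fin n → ZMod 2) → ZMod 2

/-- The Zhegalkin coefficient of the monomial `x_S` of `f`, via Möbius inversion. -/
def zCoeff {n : ℕ} (f : Bf n) (S : Finset (Fin n)) : ZMod 2 :=
  ∑ T ∈ S.powerset, f fun i => if i ∈ T then 1 else 0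

/-- The set of monomials of the Zhegalkin polynomial of `f`. -/
def monomials {n : ℕ} (f : Bf n) : Finset (Finset (Fin n)) :=
  Finset.univ.filter fun S => zCoeff f S = 1

/-- The inner negation `f^n(a) = f(ā)`. -/
def innerNeg {n : ℕ} (f : Bf n) : Bf n := fun a => f fun i => a i + 1

open Finset

/-! Substituting `x_i + 1` for `x_i` in the Zhegalkin polynomial of `f` and expanding
`∏_{i ∈ S} (x_i + 1) = ∑_{T ⊆ S} x_T` gives the formula for `f^n`. Since Zhegalkin
coefficients are unique (Möbius inversion on the Boolean lattice, where all signs vanish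
mod 2), the coefficient of `x_U` in `f^n` is the parity of the number of monomials of `f`
containing `U`. A maximal monomial `S` of `f` is the only monomial of `f` containing `S`,
and no monomial of `f` contains a proper superset of `S`; so `S` is a maximal monomial of
`f^n`. The converse follows as `f^n^n = f`. -/

theorem CharTwo.sum_powerset_sum_powerset {α R : Type*} [DecidableEq α] [CommRing R]
    [CharP R 2] (A : Finset α) (g : Finset α → R) :
    ∑ S ∈ A.powerset, ∑ T ∈ S.powerset, g T = g A := by
  rw [sum_comm' (t' := A.powerset) (s' := fun T => Icc T A) (by
    simp only [mem_powerset, mem_Icc]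
    exact fun S T =>
      ⟨fun ⟨hSA, hTS⟩ => ⟨⟨hTS, hSA⟩, hTS.trans hSA⟩, fun ⟨h, _⟩ => ⟨h.2, h.1⟩⟩)]
  refine (sum_eq_single_of_mem A (mem_powerset_self A) fun T hT hTA => ?_).trans (by simp)
  have hlt : T.card < A.card := card_lt_card (ssubset_of_subset_of_ne (mem_powerset.1 hT) hTA)
  rw [sum_const, card_Icc_finset (mem_powerset.1 hT), nsmul_eq_mul, Nat.cast_pow, Nat.cast_ofNat,
    CharTwo.two_eq_zero, zero_pow (by omega), zero_mul]

theorem Maximal.of_card_filter_superset {α : Type*} [DecidableEq α]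
    {𝓜 𝓝 : Finset (Finset α)}
    (h𝓝 : ∀ U, U ∈ 𝓝 ↔ (#{S ∈ 𝓜 | U ⊆ S} : ZMod 2) = 1) {S : Finset α}
    (hS : Maximal (· ∈ 𝓜) S) : Maximal (· ∈ 𝓝) S := by
  have filter_superset_eq (T) (hST : S ⊆ T) :
      {W ∈ 𝓜 | T ⊆ W} = ({S} : Finset (Finset α)).filter (T ⊆ ·) := by
    ext W
    simp only [mem_filter, mem_singleton]
    constructor
    · rintro ⟨hW, hTW⟩
      obtain rfl := hS.eq_of_ge hW (hST.trans hTW)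
      exact ⟨rfl, hTW⟩
    · rintro ⟨rfl, hTW⟩
      exact ⟨hS.prop, hTW⟩
  refine ⟨?_, fun T hT hST => ?_⟩
  · simp [h𝓝, filter_superset_eq S subset_rfl, filter_singleton]
  · by_contra hTS
    simp [h𝓝, filter_superset_eq T hST, filter_singleton, hTS] at hT

section Zhegalkin

variable {n : ℕ}

/-- The point of `{0,1}^n` with support `A`; `zCoeff f S` unfolds to `∑ T ⊆ S, f (charVec T)`. -/
def charVec (A : Finset (Fin n)) : Fin n → ZMod 2 := fun i => if i ∈ A then 1 else 0

theorem prod_charVec (A S : Finset (Fin n)) :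
    ∏ i ∈ S, charVec A i = if S ⊆ A then 1 else 0 :=
  prod_boole

theorem charVec_filter_eq_one (a : Fin n → ZMod 2) : charVec {i | a i = 1} = a := by
  funext i
  simp only [charVec, mem_filter, mem_univ, true_and]
  generalize a i = z
  obtain rfl | rfl : z = 0 ∨ z = 1 := by decide +revert
  all_goals rfl

def ofCoeffs (c : Finset (Fin n) → ZMod 2) : Bf n := fun a => ∑ S, c S * ∏ i ∈ S, a i

theorem ofCoeffs_charVec (c : Finset (Fin n) → ZMod 2) (A : Finset (Fin n)) :
    ofCoeffs c (charVec A) = ∑ S ∈ A.powerset, c S := by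
  simp only [ofCoeffs, prod_charVec, mul_ite, mul_one, mul_zero, ← sum_filter]
  congr 1
  ext S
  simp

theorem zCoeff_ofCoeffs (c : Finset (Fin n) → ZMod 2) : zCoeff (ofCoeffs c) = c := by
  funext U
  exact (sum_congr rfl fun T _ => ofCoeffs_charVec c T).trans
    (CharTwo.sum_powerset_sum_powerset U c)

theorem ofCoeffs_zCoeff (f : Bf n) : ofCoeffs (zCoeff f) = f := by
  funext a
  rw [← charVec_filter_eq_one a, ofCoeffs_charVec]
  exact CharTwo.sum_powerset_sum_powerset _ (fun T => f (charVec T))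

theorem eq_sum_monomials (f : Bf n) (a : Fin n → ZMod 2) :
    f a = ∑ S ∈ monomials f, ∏ i ∈ S, a i := by
  conv_lhs => rw [← ofCoeffs_zCoeff f]
  rw [ofCoeffs, monomials, sum_filter]
  refine sum_congr rfl fun S _ => ?_
  generalize zCoeff f S = z
  obtain rfl | rfl : z = 0 ∨ z = 1 := by decide +revert
  all_goals simp

theorem innerNeg_apply_eq_sum (f : Bf n) (a : Fin n → ZMod 2) :
    innerNeg f a = ∑ S ∈ monomials f, ∑ T ∈ S.powerset, ∏ i ∈ T, a i := by
  rw [innerNeg, eq_sum_monomials f]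
  exact sum_congr rfl fun S _ => prod_add_one S

theorem innerNeg_eq_ofCoeffs (f : Bf n) :
    innerNeg f = ofCoeffs fun U => (#{S ∈ monomials f | U ⊆ S} : ZMod 2) := by
  funext a
  rw [innerNeg_apply_eq_sum, sum_comm' (t' := univ) (s' := fun T => {S ∈ monomials f | T ⊆ S})
    (by simp [and_comm])]
  simp only [ofCoeffs, sum_const, nsmul_eq_mul]

theorem mem_monomials_innerNeg (f : Bf n) (U : Finset (Fin n)) :
    U ∈ monomials (innerNeg f) ↔ (#{S ∈ monomials f | U ⊆ S} : ZMod 2) = 1 := by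
  rw [innerNeg_eq_ofCoeffs, monomials, mem_filter, zCoeff_ofCoeffs]
  exact and_iff_right (mem_univ U)

theorem innerNeg_innerNeg (f : Bf n) : innerNeg (innerNeg f) = f := by
  funext a
  simp only [innerNeg, add_assoc, CharTwo.add_self_eq_zero, add_zero]

end Zhegalkin

/-- `f^n = Σ_{S ∈ M(f)} Σ_{T ⊆ S} x_T`; consequently `M(f)` and `M(f^n)` have
the same maximal elements with respect to inclusion. -/
theorem innerNeg_eq_and_maximal {n : ℕ} (f : Bf n) :
    (∀ a, innerNeg f a = ∑ S ∈ monomials f, ∑ T ∈ S.powerset, ∏ i ∈ T, a i) ∧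
    (∀ S : Finset (Fin n),
      (S ∈ monomials f ∧ ∀ T ∈ monomials f, S ⊆ T → T = S) ↔
      (S ∈ monomials (innerNeg f) ∧ ∀ T ∈ monomials (innerNeg f), S ⊆ T → T = S)) := by
  have maximal_innerNeg (g : Bf n) {S} (hS : Maximal (· ∈ monomials g) S) :
      Maximal (· ∈ monomials (innerNeg g)) S :=
    hS.of_card_filter_superset (mem_monomials_innerNeg g)
  have maximal_iff_mem (g : Bf n) (S : Finset (Fin n)) : Maximal (· ∈ monomials g) S ↔
      (S ∈ monomials g ∧ ∀ T ∈ monomials g, S ⊆ T → T = S) := by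
    simp only [maximal_iff, eq_comm (a := S)]
  refine ⟨innerNeg_apply_eq_sum f, fun S => ?_⟩
  rw [← maximal_iff_mem, ← maximal_iff_mem]
  exact ⟨maximal_innerNeg f, fun h => innerNeg_innerNeg f ▸ maximal_innerNeg (innerNeg f) h⟩
end

section
/- A Boolean function f has characteristic rank exactly k if and only if the function φ := f + f^n has degree exactly k − 1 (with the convention deg(0) = −1). -/
/-- The number of monomials of `f` properly containing `S`; the characteristic
`Char(S, f)` is its parity. -/
def charCount {n : ℕ} (f : Bf n) (S : Finset (Fin n)) : ℕ :=
  ((monomials f).filter fun A => S ⊂ A).card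

/-- The characteristic rank of `f` is at most `m`: `Char(S, f) = 0` for all
`S` with `|S| ≥ m`. -/
def CharRankLE {n : ℕ} (f : Bf n) (m : ℕ) : Prop :=
  ∀ S : Finset (Fin n), m ≤ S.card → Even (charCount f S)
/-- The degree of a Boolean function, with the convention `deg 0 = -1`. -/
def degZ {n : ℕ} (f : Bf n) : ℤ :=
  if monomials f = ∅ then -1 else (((monomials f).sup Finset.card : ℕ) : ℤ)

variable {n : ℕ}

lemma card_filter_between (W V : Finset (Fin n)) (h : W ⊆ V) :
    (V.powerset.filter fun S => W ⊆ S).card = 2 ^ (V \ W).card := by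
  rw [← Finset.card_powerset]
  apply Finset.card_bij' (fun S _ => S \ W) (fun S _ => S ∪ W)
  · intro S hS
    simp only [Finset.mem_filter, Finset.mem_powerset] at hS
    simp [Finset.mem_powerset, Finset.sdiff_subset_sdiff hS.1 le_rfl]
  · intro S hS
    simp only [Finset.mem_powerset] at hS
    simp only [Finset.mem_filter, Finset.mem_powerset]
    exact ⟨Finset.union_subset (hS.trans Finset.sdiff_subset) h, Finset.subset_union_right⟩
  · intro S hS
    simp only [Finset.mem_filter, Finset.mem_powerset] at hS
    rw [Finset.sdiff_union_self_eq_union, Finset.union_eq_left.mpr hS.2]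
  · intro S hS
    simp only [Finset.mem_powerset] at hS
    rw [Finset.union_sdiff_right]
    exact Finset.sdiff_eq_self_of_disjoint
      (Finset.disjoint_left.mpr fun a ha => (Finset.mem_sdiff.mp (hS ha)).2)
lemma zmod_card_filter_between (W V : Finset (Fin n)) (h : W ⊆ V) :
    ((V.powerset.filter fun S => W ⊆ S).card : ZMod 2) = if W = V then 1 else 0 := by
  rw [card_filter_between W V h]
  rcases eq_or_ne W V with rfl | hne
  · simp
  · have : (V \ W).card ≠ 0 := by
      simp only [ne_eq, Finset.card_eq_zero, Finset.sdiff_eq_empty_iff_subset]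
      intro hVW
      exact hne (Finset.Subset.antisymm h hVW)
    rw [if_neg hne]
    obtain ⟨m, hm⟩ := Nat.exists_eq_succ_of_ne_zero this
    rw [hm]
    push_cast
    rw [show (2:ZMod 2) = 0 by decide, zero_pow (Nat.succ_ne_zero m)]
lemma sum_zCoeff (f : Bf n) (T : Finset (Fin n)) :
    ∑ U ∈ T.powerset, zCoeff f U = f fun i => if i ∈ T then 1 else 0 := by
  unfold zCoeff
  set g : Finset (Fin n) → ZMod 2 := fun U => f fun i => if i ∈ U then 1 else 0 with hg
  calc ∑ S ∈ T.powerset, ∑ U ∈ S.powerset, g U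
      = ∑ S ∈ T.powerset, ∑ U ∈ T.powerset, if U ⊆ S then g U else 0 := by
        refine Finset.sum_congr rfl fun S hS => ?_
        have hps : S.powerset = T.powerset.filter (fun U => U ⊆ S) := by
          ext U; simp only [Finset.mem_powerset, Finset.mem_filter]
          exact ⟨fun h' => ⟨h'.trans (Finset.mem_powerset.mp hS), h'⟩, fun h' => h'.2⟩
        rw [hps, Finset.sum_filter]
    _ = ∑ U ∈ T.powerset, ((T.powerset.filter fun S => U ⊆ S).card : ZMod 2) * g U := by
        rw [Finset.sum_comm]
        refine Finset.sum_congr rfl fun U hU => ?_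
        rw [Finset.sum_ite, Finset.sum_const_zero, add_zero, Finset.sum_const, nsmul_eq_mul]
    _ = g T := by
        rw [Finset.sum_eq_single T]
        · rw [zmod_card_filter_between T T subset_rfl, if_pos rfl, one_mul]
        · intro U hU hne
          rw [zmod_card_filter_between U T (Finset.mem_powerset.mp hU), if_neg hne, zero_mul]
        · intro h; exact absurd (Finset.mem_powerset.mpr subset_rfl) h
lemma zCoeff_innerNeg (f : Bf n) (S : Finset (Fin n)) :
    zCoeff (innerNeg f) S
      = ∑ B ∈ (Finset.univ : Finset (Fin n)).powerset.filter (fun B => S ⊆ B), zCoeff f B := by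
  have step1 : zCoeff (innerNeg f) S
      = ∑ T ∈ S.powerset, f fun i => if i ∈ Tᶜ then 1 else 0 := by
    unfold zCoeff innerNeg
    refine Finset.sum_congr rfl fun T _ => ?_
    congr 1
    funext i
    by_cases hi : i ∈ T <;>
      simp only [hi, Finset.mem_compl, if_true, if_false, not_true_eq_false,
        not_false_eq_true] <;> decide
  rw [step1]
  have step2 : ∑ T ∈ S.powerset, (f fun i => if i ∈ Tᶜ then 1 else 0)
      = ∑ U ∈ (Finset.univ : Finset (Fin n)).powerset.filter (fun U => Sᶜ ⊆ U),
          (f fun i => if i ∈ U then 1 else 0) := by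
    refine Finset.sum_bij' (fun T _ => Tᶜ) (fun U _ => Uᶜ) ?_ ?_ ?_ ?_ ?_
    · intro T hT
      simp only [Finset.mem_powerset] at hT
      simp only [Finset.mem_filter, Finset.mem_powerset]
      exact ⟨Finset.subset_univ _, Finset.compl_subset_compl.mpr hT⟩
    · intro U hU
      simp only [Finset.mem_filter, Finset.mem_powerset] at hU
      simp only [Finset.mem_powerset]
      intro x hx
      by_contra hxS
      exact (Finset.mem_compl.mp hx) (hU.2 (Finset.mem_compl.mpr hxS))
    · intro T _; simp
    · intro U _; simp
    · intro T _; rfl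
  rw [step2]
  have step3 : ∀ U ∈ (Finset.univ : Finset (Fin n)).powerset.filter (fun U => Sᶜ ⊆ U),
      (f fun i => if i ∈ U then 1 else 0)
        = ∑ B ∈ (Finset.univ : Finset (Fin n)).powerset,
            if B ⊆ U then zCoeff f B else 0 := by
    intro U hU
    rw [← sum_zCoeff f U]
    have hps : U.powerset = (Finset.univ : Finset (Fin n)).powerset.filter (fun B => B ⊆ U) := by
      ext B; simp only [Finset.mem_powerset, Finset.mem_filter]
      exact ⟨fun h' => ⟨Finset.subset_univ _, h'⟩, fun h' => h'.2⟩
    rw [hps, Finset.sum_filter]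
  rw [Finset.sum_congr rfl step3, Finset.sum_filter]
  have push : ∀ a : Finset (Fin n),
      (if Sᶜ ⊆ a then ∑ B ∈ (Finset.univ : Finset (Fin n)).powerset,
          (if B ⊆ a then zCoeff f B else 0) else 0)
        = ∑ B ∈ (Finset.univ : Finset (Fin n)).powerset,
            if Sᶜ ⊆ a then (if B ⊆ a then zCoeff f B else 0) else 0 := by
    intro a; split <;> simp
  simp_rw [push]
  rw [Finset.sum_comm, Finset.sum_filter]
  refine Finset.sum_congr rfl fun B _ => ?_
  have : ∀ U : Finset (Fin n),
      (if Sᶜ ⊆ U then if B ⊆ U then zCoeff f B else 0 else 0)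
        = if Sᶜ ∪ B ⊆ U then zCoeff f B else 0 := by
    intro U
    by_cases h1 : Sᶜ ⊆ U <;> by_cases h2 : B ⊆ U <;>
      simp [h1, h2, Finset.union_subset_iff]
  simp_rw [this]
  rw [← Finset.sum_filter, Finset.sum_const, nsmul_eq_mul,
    zmod_card_filter_between _ _ (Finset.subset_univ _)]
  have hiff : (Sᶜ ∪ B = Finset.univ) ↔ S ⊆ B := by
    constructor
    · intro h x hx
      have : x ∈ Sᶜ ∪ B := h ▸ Finset.mem_univ x
      rcases Finset.mem_union.mp this with h' | h'
      · exact absurd hx (Finset.mem_compl.mp h')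
      · exact h'
    · intro h
      apply Finset.eq_univ_of_forall
      intro x
      by_cases hx : x ∈ S
      · exact Finset.mem_union_right _ (h hx)
      · exact Finset.mem_union_left _ (Finset.mem_compl.mpr hx)
  by_cases hSB : S ⊆ B <;> simp [hiff, hSB]
lemma zCoeff_add (f g : Bf n) (S : Finset (Fin n)) :
    zCoeff (fun a => f a + g a) S = zCoeff f S + zCoeff g S := by
  unfold zCoeff; rw [← Finset.sum_add_distrib]
lemma zCoeff_phi (f : Bf n) (S : Finset (Fin n)) :
    zCoeff (fun a => f a + innerNeg f a) S
      = ∑ B ∈ (Finset.univ : Finset (Fin n)).powerset.filter (fun B => S ⊂ B), zCoeff f B := by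
  rw [zCoeff_add, zCoeff_innerNeg]
  have hins : (Finset.univ : Finset (Fin n)).powerset.filter (fun B => S ⊆ B)
      = insert S ((Finset.univ : Finset (Fin n)).powerset.filter (fun B => S ⊂ B)) := by
    ext B
    simp only [Finset.mem_filter, Finset.mem_powerset, Finset.mem_insert, Finset.subset_univ,
      true_and]
    constructor
    · intro h
      rcases eq_or_ne B S with rfl | hne
      · exact Or.inl rfl
      · exact Or.inr (Finset.ssubset_iff_subset_ne.mpr ⟨h, hne.symm⟩)
    · rintro (rfl | h)
      · exact subset_rfl
      · exact h.subset
  rw [hins, Finset.sum_insert (fun hmem => (Finset.mem_filter.mp hmem).2.ne rfl)]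
  rw [← add_assoc, CharTwo.add_self_eq_zero, zero_add]
lemma zCoeff_phi_charCount (f : Bf n) (S : Finset (Fin n)) :
    zCoeff (fun a => f a + innerNeg f a) S = (charCount f S : ZMod 2) := by
  rw [zCoeff_phi]
  unfold charCount monomials
  rw [Finset.filter_filter]
  rw [Finset.card_filter]
  push_cast
  rw [Finset.powerset_univ]
  rw [Finset.sum_filter]
  refine Finset.sum_congr rfl fun B _ => ?_
  have h2 : ∀ x : ZMod 2, (if x = 1 then (1 : ZMod 2) else 0) = x := by decide
  by_cases hB : S ⊂ B
  · simp only [hB, if_true, and_true]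
    rw [← h2 (zCoeff f B)]
    split <;> simp_all
  · simp [hB]
lemma mem_monomials_phi (f : Bf n) (S : Finset (Fin n)) :
    S ∈ monomials (fun a => f a + innerNeg f a) ↔ ¬ Even (charCount f S) := by
  rw [monomials, Finset.mem_filter, zCoeff_phi_charCount]
  have h0 : ((charCount f S : ZMod 2) = 0) ↔ Even (charCount f S) := by
    rw [ZMod.natCast_eq_zero_iff]
    exact even_iff_two_dvd.symm
  constructor
  · rintro ⟨-, h1⟩ hev
    rw [h0.mpr hev] at h1
    exact one_ne_zero h1.symm
  · intro h
    refine ⟨Finset.mem_univ _, ?_⟩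
    have : (charCount f S : ZMod 2) ≠ 0 := fun hc => h (h0.mp hc)
    have : ∀ x : ZMod 2, x ≠ 0 → x = 1 := by decide
    exact this _ ‹(charCount f S : ZMod 2) ≠ 0›

/-- `f` has characteristic rank exactly `k` iff `f + f^n` has degree exactly
`k - 1` (with `deg 0 = -1`). -/
theorem charRank_eq_iff_deg {n : ℕ} (f : Bf n) (k : ℕ) :
    (CharRankLE f k ∧ ∀ j, CharRankLE f j → k ≤ j) ↔
    degZ (fun a => f a + innerNeg f a) = (k : ℤ) - 1 := by
  set M := monomials (fun a => f a + innerNeg f a) with hM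
  have hrank : ∀ m, CharRankLE f m ↔ ∀ S ∈ M, S.card < m := by
    intro m
    constructor
    · intro h S hS
      by_contra hlt
      exact (mem_monomials_phi f S).mp hS (h S (le_of_not_gt hlt))
    · intro h S hcard
      by_contra hev
      exact absurd hcard (not_le.mpr (h S ((mem_monomials_phi f S).mpr hev)))
  rcases eq_or_ne M ∅ with hemp | hne
  · rw [degZ, ← hM, if_pos hemp]
    constructor
    · rintro ⟨-, hmin⟩
      have : k ≤ 0 := hmin 0 ((hrank 0).mpr (by simp [hemp]))
      omega
    · intro h
      have hk : k = 0 := by omega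
      subst hk
      exact ⟨(hrank 0).mpr (by simp [hemp]), fun j _ => Nat.zero_le j⟩
  · have hMne : M.Nonempty := Finset.nonempty_iff_ne_empty.mpr hne
    set d := M.sup Finset.card with hd
    obtain ⟨S₀, hS₀, hS₀card⟩ := Finset.exists_mem_eq_sup M hMne Finset.card
    rw [degZ, ← hM, if_neg hne, ← hd]
    constructor
    · rintro ⟨hk, hmin⟩
      have h1 : d < k := by rw [hd, hS₀card]; exact (hrank k).mp hk S₀ hS₀
      have h2 : k ≤ d + 1 := hmin (d + 1) ((hrank (d + 1)).mpr fun S hS =>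
        Nat.lt_succ_of_le (Finset.le_sup hS))
      have : k = d + 1 := by omega
      subst this
      push_cast
      ring
    · intro h
      have hk : k = d + 1 := by omega
      subst hk
      refine ⟨(hrank (d + 1)).mpr fun S hS => Nat.lt_succ_of_le (Finset.le_sup hS), ?_⟩
      intro j hj
      have := (hrank j).mp hj S₀ hS₀
      omega
end

section
/- If a Boolean function f has characteristic rank at most k for some k > 0, then for every coordinate i, the function f'_i has characteristic rank at most k − 1. Moreover, if f ≠ 0 then deg(f'_i) < deg(f). -/
/-- The function `f'_i`, with monomials `{ S \ {i} : S ∈ M(f), i ∈ S }`. -/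
def deriv' {n : ℕ} (f : Bf n) (i : Fin n) : Bf n :=
  fun a => ∑ S ∈ (monomials f).filter (fun S => i ∈ S), ∏ j ∈ S.erase i, a j


open Finset in
theorem sum_ind_powerset {n : ℕ} (S T : Finset (Fin n)) :
    (∑ U ∈ T.powerset, if S ⊆ U then (1:ZMod 2) else 0) = if S = T then 1 else 0 := by
  rw [Finset.sum_boole, ← Icc_eq_filter_powerset]
  by_cases h : S ⊆ T
  · rw [card_Icc_finset h]
    rcases eq_or_ne S T with rfl | hne
    · simp
    · rw [if_neg hne]
      have hlt : S.card < T.card := card_lt_card (lt_of_le_of_ne h hne)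
      have hne0 : T.card - S.card ≠ 0 := by omega
      obtain ⟨m, hm⟩ := Nat.exists_eq_succ_of_ne_zero hne0
      have h2 : (2 : ZMod 2) = 0 := by decide
      rw [hm]
      push_cast [pow_succ]
      rw [h2, mul_zero]
  · rw [Finset.Icc_eq_empty (by simpa using h)]
    rw [if_neg (by rintro rfl; exact h Finset.Subset.rfl)]
    simp

theorem prod_ind {n : ℕ} (S U : Finset (Fin n)) :
    (∏ j ∈ S, if j ∈ U then (1:ZMod 2) else 0) = if S ⊆ U then 1 else 0 := by
  by_cases h : S ⊆ U
  · rw [if_pos h]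
    exact Finset.prod_eq_one fun j hj => if_pos (h hj)
  · rw [if_neg h]
    obtain ⟨j, hjS, hjU⟩ := Finset.not_subset.mp h
    exact Finset.prod_eq_zero hjS (if_neg hjU)

theorem zCoeff_sumMon {n : ℕ} (𝒮 : Finset (Finset (Fin n))) (T : Finset (Fin n)) :
    zCoeff (fun a => ∑ S ∈ 𝒮, ∏ j ∈ S, a j) T = if T ∈ 𝒮 then 1 else 0 := by
  unfold zCoeff
  simp only [prod_ind]
  rw [Finset.sum_comm]
  calc ∑ S ∈ 𝒮, ∑ U ∈ T.powerset, (if S ⊆ U then (1:ZMod 2) else 0)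
      = ∑ S ∈ 𝒮, if S = T then 1 else 0 :=
        Finset.sum_congr rfl fun S _ => sum_ind_powerset S T
    _ = if T ∈ 𝒮 then 1 else 0 := Finset.sum_ite_eq' 𝒮 T (fun _ => (1:ZMod 2))

theorem monomials_sumMon {n : ℕ} (𝒮 : Finset (Finset (Fin n))) :
    monomials (fun a => ∑ S ∈ 𝒮, ∏ j ∈ S, a j) = 𝒮 := by
  ext T
  simp only [monomials, Finset.mem_filter, Finset.mem_univ, true_and, zCoeff_sumMon]
  by_cases h : T ∈ 𝒮 <;> simp [h]

theorem inversion {n : ℕ} (f : Bf n) (T : Finset (Fin n)) :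
    f (fun j => if j ∈ T then 1 else 0) = ∑ S ∈ T.powerset, zCoeff f S := by
  unfold zCoeff
  set g : Finset (Fin n) → ZMod 2 := fun U => f (fun j => if j ∈ U then 1 else 0) with hg
  show g T = _
  symm
  calc ∑ S ∈ T.powerset, ∑ U ∈ S.powerset, g U
      = ∑ S ∈ T.powerset, ∑ U ∈ T.powerset, if U ⊆ S then g U else 0 := by
        refine Finset.sum_congr rfl fun S hS => ?_
        rw [Finset.sum_ite, Finset.sum_const_zero, add_zero]
        refine (Finset.sum_congr ?_ fun _ _ => rfl)
        ext U
        simp only [Finset.mem_filter, Finset.mem_powerset]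
        constructor
        · exact fun h => ⟨h.trans (Finset.mem_powerset.mp hS), h⟩
        · exact fun h => h.2
    _ = ∑ U ∈ T.powerset, ∑ S ∈ T.powerset, if U ⊆ S then g U else 0 := Finset.sum_comm
    _ = ∑ U ∈ T.powerset, if U = T then g U else 0 := by
        refine Finset.sum_congr rfl fun U _ => ?_
        have : ∀ S : Finset (Fin n), (if U ⊆ S then g U else 0) =
            g U * (if U ⊆ S then 1 else 0) := by intro S; split <;> simp
        simp_rw [this, ← Finset.mul_sum, sum_ind_powerset U T]
        split <;> simp
    _ = g T := by
        rw [Finset.sum_ite_eq' T.powerset T g, if_pos (Finset.mem_powerset_self T)]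

theorem monomials_ne_empty {n : ℕ} {f : Bf n} (hf : f ≠ fun _ => 0) :
    monomials f ≠ ∅ := by
  intro h
  apply hf
  have hz : ∀ S, zCoeff f S = 0 := by
    intro S
    have h01 : ∀ x : ZMod 2, x = 0 ∨ x = 1 := by decide
    rcases h01 (zCoeff f S) with h0 | h1
    · exact h0
    · exfalso
      have : S ∈ monomials f := by simp [monomials, h1]
      simp [h] at this
  funext a
  have ha : a = fun j => if j ∈ (Finset.univ.filter fun j => a j = 1) then 1 else 0 := by
    funext j
    have h01 : ∀ x : ZMod 2, x = 0 ∨ x = 1 := by decide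
    rcases h01 (a j) with h | h <;> simp [h]
  rw [ha, inversion f]
  simp [hz]

/-- If `χ(f) ≤ k` with `k > 0` then `χ(f'_i) ≤ k - 1`; moreover if `f ≠ 0`
then `deg(f'_i) < deg(f)` (with `deg 0 = -1`). -/
theorem deriv'_charRank_and_deg {n : ℕ} (f : Bf n) (i : Fin n) :
    (∀ k : ℕ, 0 < k → CharRankLE f k → CharRankLE (deriv' f i) (k - 1)) ∧
    (f ≠ (fun _ => 0) → degZ (deriv' f i) < degZ f) := by
  classical
  set 𝒟 : Finset (Finset (Fin n)) :=
    ((monomials f).filter (fun S => i ∈ S)).image (fun S => S.erase i) with h𝒟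
  have hinj : Set.InjOn (fun S : Finset (Fin n) => S.erase i)
      (↑((monomials f).filter fun S => i ∈ S) : Set (Finset (Fin n))) := by
    intro A hA B hB hAB
    simp only [Finset.coe_filter, Set.mem_setOf_eq] at hA hB
    rw [← Finset.insert_erase hA.2, ← Finset.insert_erase hB.2]
    simp only at hAB
    rw [hAB]
  have hderiv : deriv' f i = fun a => ∑ S ∈ 𝒟, ∏ j ∈ S, a j := by
    funext a
    rw [h𝒟, Finset.sum_image fun A hA B hB h => hinj hA hB h]
    rfl
  have hmon : monomials (deriv' f i) = 𝒟 := by rw [hderiv, monomials_sumMon]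
  constructor
  · intro k hk hf S hS
    by_cases hiS : i ∈ S
    · have hempty : (monomials (deriv' f i)).filter (fun A => S ⊂ A) = ∅ := by
        rw [Finset.filter_eq_empty_iff]
        intro A hA hSA
        rw [hmon, h𝒟, Finset.mem_image] at hA
        obtain ⟨B, hB, rfl⟩ := hA
        exact (Finset.notMem_erase i B) (hSA.subset hiS)
      unfold charCount
      rw [hempty]
      simp
    · have hcard : charCount (deriv' f i) S = charCount f (insert i S) := by
        unfold charCount
        rw [hmon, h𝒟, Finset.filter_image,
          Finset.card_image_of_injOn (hinj.mono (by
            intro A hA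
            simp only [Finset.coe_filter, Set.mem_setOf_eq, Finset.mem_coe,
              Finset.mem_filter] at hA ⊢
            exact hA.1))]
        congr 1
        ext A
        simp only [Finset.mem_filter]
        constructor
        · rintro ⟨⟨hAf, hiA⟩, hSA⟩
          refine ⟨hAf, ?_⟩
          constructor
          · intro x hx
            rcases Finset.mem_insert.mp hx with rfl | hxS
            · exact hiA
            · exact (Finset.erase_subset i A) (hSA.subset hxS)
          · intro hAi
            have : A.erase i ⊆ S := by
              intro x hx
              have hxA : x ∈ A := Finset.mem_of_mem_erase hx
              have hxi : x ≠ i := Finset.ne_of_mem_erase hx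
              rcases Finset.mem_insert.mp (hAi hxA) with h | h
              · exact absurd h hxi
              · exact h
            exact hSA.not_subset this
        · rintro ⟨hAf, hSA⟩
          have hiA : i ∈ A := hSA.subset (Finset.mem_insert_self i S)
          refine ⟨⟨hAf, hiA⟩, ?_⟩
          constructor
          · intro x hx
            refine Finset.mem_erase.mpr ⟨fun h => hiS (h ▸ hx), hSA.subset ?_⟩
            exact Finset.mem_insert_of_mem hx
          · intro hE
            have : A ⊆ insert i S := by
              intro x hx
              by_cases hxi : x = i
              · exact hxi ▸ Finset.mem_insert_self i S
              · exact Finset.mem_insert_of_mem (hE (Finset.mem_erase.mpr ⟨hxi, hx⟩))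
            exact hSA.not_subset this
      rw [hcard]
      apply hf
      rw [Finset.card_insert_of_notMem hiS]
      omega
  · intro hf
    have hne := monomials_ne_empty hf
    rw [degZ, degZ, if_neg hne]
    by_cases hD : monomials (deriv' f i) = ∅
    · rw [if_pos hD]
      have := Int.natCast_nonneg ((monomials f).sup Finset.card)
      omega
    · rw [if_neg hD]
      have hsup : (monomials (deriv' f i)).sup Finset.card <
          (monomials f).sup Finset.card := by
        obtain ⟨A', hA'⟩ := Finset.nonempty_iff_ne_empty.mpr hD
        have hpos : 0 < (monomials f).sup Finset.card := by
          rw [hmon, h𝒟, Finset.mem_image] at hA'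
          obtain ⟨B, hB, rfl⟩ := hA'
          rw [Finset.mem_filter] at hB
          calc 0 < B.card := Finset.card_pos.mpr ⟨i, hB.2⟩
            _ ≤ _ := Finset.le_sup hB.1
        rw [Finset.sup_lt_iff hpos]
        intro A hA
        rw [hmon, h𝒟, Finset.mem_image] at hA
        obtain ⟨B, hB, rfl⟩ := hA
        rw [Finset.mem_filter] at hB
        calc (B.erase i).card < B.card := by
              rw [Finset.card_erase_of_mem hB.2]
              have : 0 < B.card := Finset.card_pos.mpr ⟨i, hB.2⟩
              omega
          _ ≤ _ := Finset.le_sup hB.1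
      exact_mod_cast hsup
end
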